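/- arXiv:2604.21887 — 2 statements merged into one kernel-verified Lean document; each statement's English description precedes it below -/
import Mathlib

section
/- Let V be a real Hilbert space with inner product a and induced norm ‖·‖. If P : V → V is a bounded linear oblique projection (P² = P) with P ≠ 0 and P ≠ id, then the operator norms satisfy ‖id − P‖ = ‖P‖. -/
/-!
For `x = u + v` with `u = P x` and `v = x - P x`, applying `P` to `u - t • v` gives
`‖u‖ ≤ ‖P‖ * ‖u - t • v‖` for every `t`, i.e. the sine of the angle between `u` and `v` is at
least `1 / ‖P‖`. The Gram identity shows `‖u‖ * dist(v, ℝu) = ‖v‖ * dist(u, ℝv)` (both are the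
area of the parallelogram spanned by `u` and `v`), so the same bound holds with `u` and `v`
exchanged, and `t = -1` gives `‖x - P x‖ ≤ ‖P‖ * ‖x‖`. The same argument for the projection
`1 - P` gives the reverse inequality.
-/

open scoped RealInnerProductSpace

theorem IsIdempotentElem.one_le_norm {R : Type*} [NonUnitalNormedRing R] {p : R}
    (hp : IsIdempotentElem p) (h0 : p ≠ 0) : 1 ≤ ‖p‖ := by
  refine le_of_mul_le_mul_right ?_ (norm_pos_iff.mpr h0)
  calc 1 * ‖p‖ = ‖p * p‖ := by rw [hp.eq, one_mul]
    _ ≤ ‖p‖ * ‖p‖ := norm_mul_le p p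

section InnerProductSpace
variable {V : Type*} [NormedAddCommGroup V] [InnerProductSpace ℝ V]

theorem norm_sq_mul_norm_sub_smul_sq (u v : V) (t : ℝ) :
    ‖u‖ ^ 2 * ‖v - t • u‖ ^ 2 = ‖u‖ ^ 2 * ‖v‖ ^ 2 - ⟪u, v⟫ ^ 2 + (t * ‖u‖ ^ 2 - ⟪u, v⟫) ^ 2 := by
  rw [norm_sub_sq_real, real_inner_smul_right, norm_smul, Real.norm_eq_abs, mul_pow, sq_abs,
    real_inner_comm]
  ring

theorem norm_le_mul_norm_sub_smul_of_forall_le {u v : V} {k : ℝ} (hk : 1 ≤ k)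
    (h : ∀ t : ℝ, ‖u‖ ≤ k * ‖u - t • v‖) (s : ℝ) : ‖v‖ ≤ k * ‖v - s • u‖ := by
  rcases eq_or_ne u 0 with rfl | hu
  · simpa using le_mul_of_one_le_left (norm_nonneg v) hk
  rcases eq_or_ne v 0 with rfl | hv
  · simp only [norm_zero, zero_sub, norm_neg]; positivity
  set G := ‖u‖ ^ 2 * ‖v‖ ^ 2 - ⟪u, v⟫ ^ 2
  have hproj : ‖v‖ ^ 2 * ‖u - (⟪v, u⟫ / ‖v‖ ^ 2) • v‖ ^ 2 = G := by
    rw [norm_sq_mul_norm_sub_smul_sq, div_mul_cancel₀ _ (by positivity), sub_self, real_inner_comm]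
    ring
  have hGs : G ≤ ‖u‖ ^ 2 * ‖v - s • u‖ ^ 2 := by
    rw [norm_sq_mul_norm_sub_smul_sq]
    exact le_add_of_nonneg_right (sq_nonneg _)
  have key : ‖u‖ ^ 2 * ‖v‖ ^ 2 ≤ ‖u‖ ^ 2 * (k * ‖v - s • u‖) ^ 2 := by
    calc ‖u‖ ^ 2 * ‖v‖ ^ 2 ≤ (k * ‖u - (⟪v, u⟫ / ‖v‖ ^ 2) • v‖) ^ 2 * ‖v‖ ^ 2 := by
          gcongr; exact h _
      _ = k ^ 2 * G := by rw [← hproj]; ring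
      _ ≤ k ^ 2 * (‖u‖ ^ 2 * ‖v - s • u‖ ^ 2) := by gcongr
      _ = ‖u‖ ^ 2 * (k * ‖v - s • u‖) ^ 2 := by ring
  have hsq := le_of_mul_le_mul_left key (by positivity)
  exact le_of_pow_le_pow_left₀ two_ne_zero (by positivity) hsq

theorem norm_sub_apply_le_of_isIdempotentElem {P : V →L[ℝ] V} (hP : IsIdempotentElem P)
    (h0 : P ≠ 0) (x : V) : ‖x - P x‖ ≤ ‖P‖ * ‖x‖ := by
  have hPP : P (P x) = P x := congrArg (· x) hP.eq
  have hrange : ∀ t : ℝ, ‖P x‖ ≤ ‖P‖ * ‖P x - t • (x - P x)‖ := fun t => by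
    simpa [hPP] using P.le_opNorm (P x - t • (x - P x))
  simpa using norm_le_mul_norm_sub_smul_of_forall_le (hP.one_le_norm h0) hrange (-1)

theorem IsIdempotentElem.norm_one_sub_le {P : V →L[ℝ] V} (hP : IsIdempotentElem P)
    (h0 : P ≠ 0) : ‖1 - P‖ ≤ ‖P‖ :=
  (1 - P).opNorm_le_bound (norm_nonneg P) (norm_sub_apply_le_of_isIdempotentElem hP h0)

end InnerProductSpace

theorem kato_projection_norm_general {V : Type*} [NormedAddCommGroup V] [InnerProductSpace ℝ V]
    (P : V →L[ℝ] V) (hidem : P.comp P = P) (h0 : P ≠ 0)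
    (h1 : P ≠ ContinuousLinearMap.id ℝ V) :
    ‖ContinuousLinearMap.id ℝ V - P‖ = ‖P‖ := by
  have hP : IsIdempotentElem P := hidem
  have hQ0 : 1 - P ≠ 0 := sub_ne_zero.mpr (Ne.symm h1)
  have hQ := hP.one_sub.norm_one_sub_le hQ0
  rw [sub_sub_cancel] at hQ
  exact le_antisymm (hP.norm_one_sub_le h0) hQ

/-- Kato's lemma: for a nontrivial oblique projection `P` on a real Hilbert space,
`‖id - P‖ = ‖P‖`. -/
theorem kato_projection_norm {V : Type*} [NormedAddCommGroup V] [InnerProductSpace ℝ V]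
    [CompleteSpace V] (P : V →L[ℝ] V) (hidem : P.comp P = P) (h0 : P ≠ 0)
    (h1 : P ≠ ContinuousLinearMap.id ℝ V) :
    ‖ContinuousLinearMap.id ℝ V - P‖ = ‖P‖ :=
  kato_projection_norm_general P hidem h0 h1
end

section
/- Let V, W be Banach spaces, A : V → W a linear isomorphism, and G : V → W a map such that ‖A v + G v‖ → ∞ whenever ‖v‖ → ∞ (weak coercivity), and such that G maps bounded sets to relatively compact sets. Then the map T = A + G is proper: the preimage T⁻¹(K) of every compact set K ⊆ W is compact in V. -/
/-- A weakly coercive compact perturbation `T = A + G` of a linear isomorphism is proper: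
preimages of compact sets are compact. -/
theorem compact_perturbation_proper {V W : Type*} [NormedAddCommGroup V] [NormedSpace ℝ V]
    [NormedAddCommGroup W] [NormedSpace ℝ W]
    (A : V ≃L[ℝ] W) (G : V → W) (hGcont : Continuous G)
    (hGcompact : ∀ s : Set V, Bornology.IsBounded s → IsCompact (closure (G '' s)))
    (hcoercive : Filter.Tendsto (fun v => ‖A v + G v‖)
      (Filter.comap norm Filter.atTop) Filter.atTop)
    (K : Set W) (hK : IsCompact K) :
    IsCompact ((fun v => A v + G v) ⁻¹' K) := by
  set T : V → W := fun v => A v + G v with hT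
  set S : Set V := T ⁻¹' K with hS
  -- K is bounded
  obtain ⟨R, hR⟩ := hK.isBounded.subset_closedBall 0
  -- coercivity gives r such that ‖v‖ ≥ r → ‖T v‖ > R
  have h1 : ∀ᶠ v in Filter.comap norm Filter.atTop, ‖T v‖ > R :=
    hcoercive.eventually (Filter.eventually_gt_atTop R)
  rw [Filter.eventually_comap] at h1
  obtain ⟨r, hr⟩ := Filter.eventually_atTop.mp h1
  -- S is bounded
  have hSbdd : Bornology.IsBounded S := by
    apply (Metric.isBounded_closedBall (x := (0 : V)) (r := |r|)).subset
    intro v hv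
    simp only [Metric.mem_closedBall, dist_zero_right]
    by_contra hnot
    push_neg at hnot
    have hvr : r ≤ ‖v‖ := le_trans (le_abs_self r) hnot.le
    have := hr ‖v‖ hvr v rfl
    have hvK : ‖T v‖ ≤ R := by
      have := hR hv
      simpa [dist_zero_right] using this
    linarith
  -- sequential compactness
  have hclosed : IsClosed S := hK.isClosed.preimage (by continuity)
  have hseq : IsSeqCompact S := by
    intro u hu
    obtain ⟨w, hwK, φ, hφ, hTw⟩ := hK.isSeqCompact (fun n => hu n)
    have hGmem : ∀ n, G (u (φ n)) ∈ closure (G '' S) :=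
      fun n => subset_closure (Set.mem_image_of_mem G (hu (φ n)))
    obtain ⟨g, hg, ψ, hψ, hGg⟩ := (hGcompact S hSbdd).isSeqCompact hGmem
    have hTw' : Filter.Tendsto (fun n => T (u (φ (ψ n)))) Filter.atTop (nhds w) :=
      hTw.comp hψ.tendsto_atTop
    have hAu : Filter.Tendsto (fun n => A (u (φ (ψ n)))) Filter.atTop (nhds (w - g)) := by
      have : (fun n => A (u (φ (ψ n)))) =
          fun n => T (u (φ (ψ n))) - G (u (φ (ψ n))) := by
        funext n; simp [hT]
      rw [this]
      exact hTw'.sub hGg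
    have hux : Filter.Tendsto (fun n => u (φ (ψ n))) Filter.atTop (nhds (A.symm (w - g))) := by
      have := (A.symm.continuous.tendsto _).comp hAu
      simpa only [Function.comp_def, ContinuousLinearEquiv.symm_apply_apply] using this
    refine ⟨A.symm (w - g), ?_, φ ∘ ψ, hφ.comp hψ, hux⟩
    exact hclosed.mem_of_tendsto hux (Filter.Eventually.of_forall fun n => hu (φ (ψ n)))
  exact hseq.isCompact
end
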